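/- Every characteristic subgroup of ℤ × ℤ is equal to the x-characteristic subgroup x(ℤ × ℤ) for some natural number x. -/
import Mathlib

/-- The shear automorphism `(a,b) ↦ (a, b + n*a)` of `ℤ × ℤ`. -/
def shearEquiv (n : ℤ) : (ℤ × ℤ) ≃+ (ℤ × ℤ) where
  toFun p := (p.1, p.2 + n * p.1)
  invFun p := (p.1, p.2 - n * p.1)
  left_inv p := by ext <;> simp <;> ring
  right_inv p := by ext <;> simp <;> ring
  map_add' p q := by ext <;> simp <;> ring

/-- Every characteristic subgroup of `ℤ × ℤ` (i.e. a subgroup invariant under all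
automorphisms) equals the `x`-characteristic subgroup `x(ℤ × ℤ) = {(xa, xb) : a, b ∈ ℤ}`
for some natural number `x`. -/
theorem stmt_1 (H : AddSubgroup (ℤ × ℤ))
    (hchar : ∀ φ : (ℤ × ℤ) ≃+ (ℤ × ℤ), H.map φ.toAddMonoidHom = H) :
    ∃ x : ℕ, ∀ p : ℤ × ℤ, p ∈ H ↔ ∃ a b : ℤ, p = ((x : ℤ) * a, (x : ℤ) * b) := by
  have hswap : ∀ p : ℤ × ℤ, p ∈ H → (p.2, p.1) ∈ H := by
    intro p hp
    have := hchar (AddEquiv.prodComm)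
    rw [← this]
    exact ⟨p, hp, rfl⟩
  have hshear : ∀ n : ℤ, ∀ p : ℤ × ℤ, p ∈ H → (p.1, p.2 + n * p.1) ∈ H := by
    intro n p hp
    have := hchar (shearEquiv n)
    rw [← this]
    exact ⟨p, hp, rfl⟩
  set K : AddSubgroup ℤ := H.map (AddMonoidHom.fst ℤ ℤ) with hK
  obtain ⟨g, hg⟩ := Int.subgroup_cyclic K
  -- membership in K iff g divides
  have hKmem : ∀ a : ℤ, a ∈ K ↔ g ∣ a := by
    intro a
    rw [hg, AddSubgroup.mem_closure_singleton]
    constructor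
    · rintro ⟨n, rfl⟩; exact ⟨n, by rw [zsmul_eq_mul, Int.cast_id]; ring⟩
    · rintro ⟨n, rfl⟩; exact ⟨n, by rw [zsmul_eq_mul, Int.cast_id]; ring⟩
  have hfst : ∀ p : ℤ × ℤ, p ∈ H → g ∣ p.1 := by
    intro p hp
    exact (hKmem p.1).mp ⟨p, hp, rfl⟩
  have hsnd : ∀ p : ℤ × ℤ, p ∈ H → g ∣ p.2 := by
    intro p hp
    exact hfst _ (hswap p hp)
  refine ⟨g.natAbs, fun p => ⟨fun hp => ?_, fun hp => ?_⟩⟩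
  · obtain ⟨a, ha⟩ := (Int.natAbs_dvd.mpr (hfst p hp))
    obtain ⟨b, hb⟩ := (Int.natAbs_dvd.mpr (hsnd p hp))
    exact ⟨a, b, Prod.ext ha hb⟩
  · obtain ⟨a, b, rfl⟩ := hp
    rcases eq_or_ne g 0 with h0 | h0
    · simp [h0]
      exact H.zero_mem
    -- (g.natAbs, c) ∈ H for some c
    have hgK : (g.natAbs : ℤ) ∈ K := by
      rw [hKmem]; exact Int.dvd_natAbs.mpr dvd_rfl
    obtain ⟨q, hq, hq1⟩ := hgK
    simp only [AddMonoidHom.coe_fst] at hq1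
    have hdvd : g ∣ q.2 := hsnd q hq
    have hdvd' : (g.natAbs : ℤ) ∣ q.2 := Int.natAbs_dvd.mpr hdvd
    obtain ⟨m, hm⟩ := hdvd'
    have hx0 : ((g.natAbs : ℤ), 0) ∈ H := by
      have := hshear (-m) q hq
      have h2 : (q.1, q.2 + (-m) * q.1) = ((g.natAbs : ℤ), 0) := by
        ext <;> simp [hq1, hm] <;> ring
      rwa [h2] at this
    have h0x : ((0 : ℤ), (g.natAbs : ℤ)) ∈ H := hswap _ hx0
    have h1 : a • (((g.natAbs : ℤ)), (0:ℤ)) + b • ((0:ℤ), ((g.natAbs : ℤ))) ∈ H :=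
      H.add_mem (H.zsmul_mem hx0 a) (H.zsmul_mem h0x b)
    have h2 : a • (((g.natAbs : ℤ)), (0:ℤ)) + b • ((0:ℤ), ((g.natAbs : ℤ)))
        = ((g.natAbs : ℤ) * a, (g.natAbs : ℤ) * b) := by
      ext <;> simp [Prod.smul_def] <;> ring
    rwa [h2] at h1
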